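/- Let u, v be words, s the maximal common suffix of v^∞ and v^∞u. If y and z are suffixes of (possibly distinct) concatenations of u and v, both of length at least |s|, and v is a suffix of u with u, v not powers of a common word, then for any word w, the maximal common suffix of yvw and zuw equals sw. -/

import Mathlib

/-- The `k`-fold concatenation of the word `v` with itself. -/
def wpow {A : Type*} (v : List A) (k : ℕ) : List A := (List.replicate k v).flatten

/-- `s` is a (finite) suffix of the left-infinite word `x`, where `x n` denotes the
letter of `x` at distance `n` from the right end (`x 0` is the last letter). -/
def LSuffix {A : Type*} (s : List A) (x : ℕ → A) : Prop :=
  ∀ i, i < s.length → s.reverse[i]? = some (x i)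

/-- `w` is a concatenation of the words `u` and `v`. -/
def IsConcat {A : Type*} (u v w : List A) : Prop :=
  ∃ l : List (List A), (∀ x ∈ l, x = u ∨ x = v) ∧ w = l.flatten

/-- `t` is the maximal common suffix of the finite words `a` and `b`. -/
def IsMaxCommonSuffix {A : Type*} (t a b : List A) : Prop :=
  t <:+ a ∧ t <:+ b ∧ ∀ t' : List A, t' <:+ a → t' <:+ b → t'.length ≤ t.length

/-!
Write `f l` for the left-infinite word `f` followed by the finite word `l`. Then `x v = x`,
`x u = x'`, and `x`, `x'` agree on their last `|s|` letters but differ at position `|s|`.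
Appending a word preserves agreement on the last letters, so `x c` agrees with `x` on the last
`|s|` letters for every concatenation `c` of `u` and `v`. Hence `y v` ends with `x_{|s|} s` and
`z u` ends with `x'_{|s|} s`: the letters preceding `s` differ, so `s w` is maximal.
-/

open Set

section

variable {A : Type*}

theorem List.IsSuffix.getElem?_reverse {t l : List A} (h : t <:+ l) {i : ℕ}
    (hi : i < t.length) : l.reverse[i]? = t.reverse[i]? := by
  rw [List.prefix_iff_getElem?.mp (List.reverse_prefix.mpr h) i (by simpa using hi),
    List.getElem?_eq_getElem]

/-- The left-infinite word `f l`: the finite word `l` appended to the right of `f`. -/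
def lappend (f : ℕ → A) (l : List A) : ℕ → A :=
  fun i => l.reverse[i]?.getD (f (i - l.length))

@[simp]
theorem lappend_nil (f : ℕ → A) : lappend f [] = f := by
  funext i
  simp [lappend]

theorem lappend_append (f : ℕ → A) (a b : List A) :
    lappend f (a ++ b) = lappend (lappend f a) b := by
  funext i
  unfold lappend
  rw [List.reverse_append, List.length_append]
  by_cases hi : i < b.length
  · have hi' : i < b.reverse.length := by simpa using hi
    rw [List.getElem?_append_left hi', List.getElem?_eq_getElem hi']
    rfl
  · have hi' : b.reverse.length ≤ i := by simpa using hi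
    rw [List.getElem?_append_right hi', List.getElem?_eq_none hi', Option.getD_none,
      List.length_reverse, Nat.sub_sub, Nat.add_comm b.length]

theorem lsuffix_lappend (f : ℕ → A) (l : List A) : LSuffix l (lappend f l) := by
  intro i hi
  simp [lappend, List.getElem?_eq_getElem (by simpa using hi : i < l.reverse.length)]

theorem eqOn_lappend {f g : ℕ → A} {n : ℕ} (h : EqOn f g (Iio n)) (l : List A) :
    EqOn (lappend f l) (lappend g l) (Iio (n + l.length)) := by
  intro i hi
  by_cases hil : i < l.length
  · simp [lappend, List.getElem?_eq_getElem (by simpa using hil : i < l.reverse.length)]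
  · simp only [lappend, List.getElem?_eq_none (by simpa using hil : l.reverse.length ≤ i),
      Option.getD_none]
    exact h (show i - l.length < n by simp only [mem_Iio] at hi; omega)

theorem eqOn_lappend_flatten {f : ℕ → A} {n : ℕ} {L : List (List A)}
    (h : ∀ b ∈ L, EqOn (lappend f b) f (Iio n)) : EqOn (lappend f L.flatten) f (Iio n) := by
  induction L with
  | nil => simp [EqOn]
  | cons b L ih =>
    rw [List.flatten_cons, lappend_append]
    have hL := ih fun c hc => h c (List.mem_cons_of_mem b hc)
    exact ((eqOn_lappend (h b List.mem_cons_self) _).mono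
      (Iio_subset_Iio (Nat.le_add_right _ _))).trans hL

namespace LSuffix

theorem of_isSuffix {t l : List A} {f : ℕ → A} (htl : t <:+ l) (hl : LSuffix l f) :
    LSuffix t f := by
  intro i hi
  rw [← hl i (hi.trans_le htl.length_le), htl.getElem?_reverse hi]

theorem of_eqOn {t : List A} {f g : ℕ → A} (ht : LSuffix t f) (h : EqOn f g (Iio t.length)) :
    LSuffix t g := fun i hi => h hi ▸ ht i hi

theorem eqOn {s : List A} {f g : ℕ → A} (hf : LSuffix s f) (hg : LSuffix s g) :
    EqOn f g (Iio s.length) := fun i hi => Option.some_injective _ ((hf i hi).symm.trans (hg i hi))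

theorem cons_apply_length {s : List A} {f : ℕ → A} (h : LSuffix s f) :
    LSuffix (f s.length :: s) f := by
  intro i hi
  rw [List.reverse_cons]
  rcases (Nat.lt_succ_iff.mp (by simpa using hi)).lt_or_eq with hi | rfl
  · rw [List.getElem?_append_left (by simpa using hi)]
    exact h i hi
  · simp

theorem isSuffix_of_length_le {t l : List A} {f : ℕ → A} (ht : LSuffix t f) (hl : LSuffix l f)
    (htl : t.length ≤ l.length) : t <:+ l := by
  rw [← List.reverse_prefix, List.prefix_iff_getElem?]
  intro i hi
  rw [List.length_reverse] at hi
  rw [hl i (hi.trans_le htl), ← List.getElem?_eq_getElem, ht i hi]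

theorem lappend_eqOn {a b : List A} {f g : ℕ → A} (hab : LSuffix (a ++ b) g)
    (ha : LSuffix a f) :
    EqOn (lappend f b) g (Iio (a.length + b.length)) := by
  intro i hi
  have hg := hab i (by simpa using hi)
  rw [List.reverse_append] at hg
  simp only [lappend]
  by_cases hib : i < b.length
  · rw [List.getElem?_append_left (by simpa using hib)] at hg
    rw [hg, Option.getD_some]
  · rw [List.getElem?_append_right (by simpa using hib), List.length_reverse,
      ha _ (by simp only [mem_Iio] at hi; omega)] at hg
    rw [List.getElem?_eq_none (by simpa using hib), Option.getD_none]
    exact Option.some_injective _ hg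

end LSuffix

theorem wpow_succ (v : List A) (k : ℕ) : wpow v (k + 1) = wpow v k ++ v := by
  simp [wpow, List.replicate_succ']

theorem length_wpow (v : List A) (k : ℕ) : (wpow v k).length = k * v.length := by
  simp [wpow]

theorem lappend_eq_of_lsuffix_wpow {v b : List A} {x g : ℕ → A} (hv : v ≠ [])
    (hx : ∀ k, LSuffix (wpow v k) x) (hg : ∀ k, LSuffix (wpow v k ++ b) g) :
    lappend x b = g := by
  funext i
  refine (hg (i + 1)).lappend_eqOn (hx (i + 1)) ?_
  have := List.length_pos_iff.mpr hv
  simp only [mem_Iio, length_wpow]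
  nlinarith

theorem isSuffix_append_of_lappend_eqOn {f : ℕ → A} {n : ℕ} {b c t y : List A}
    (hyc : y <:+ c) (hc : EqOn (lappend f c) f (Iio n)) (ht : LSuffix t (lappend f b))
    (htn : t.length ≤ n + b.length) (hty : t.length ≤ y.length + b.length) : t <:+ y ++ b := by
  have hyb : LSuffix (y ++ b) (lappend f (c ++ b)) :=
    (lsuffix_lappend f _).of_isSuffix (List.suffix_append_self_iff.mpr hyc)
  have hcb : EqOn (lappend f b) (lappend f (c ++ b)) (Iio t.length) := by
    rw [lappend_append]
    exact ((eqOn_lappend hc b).mono (Iio_subset_Iio htn)).symm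
  exact (ht.of_eqOn hcb).isSuffix_of_length_le hyb (by simpa using hty)

theorem getElem?_reverse_append_of_cons_isSuffix {a t : List A} {c : A} (h : c :: t <:+ a)
    (w : List A) : (a ++ w).reverse[t.length + w.length]? = some c := by
  rw [(List.suffix_append_self_iff.mpr h).getElem?_reverse (by simp)]
  simp [List.getElem?_append_right]

theorem isMaxCommonSuffix_append_of_cons_isSuffix {a b t : List A} {c d : A}
    (ha : c :: t <:+ a) (hb : d :: t <:+ b) (hcd : c ≠ d) (w : List A) :
    IsMaxCommonSuffix (t ++ w) (a ++ w) (b ++ w) := by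
  refine ⟨List.suffix_append_self_iff.mpr ((List.suffix_cons c t).trans ha),
    List.suffix_append_self_iff.mpr ((List.suffix_cons d t).trans hb), fun t' hta htb => ?_⟩
  by_contra! hlt
  have hi : t.length + w.length < t'.length := by simpa using hlt
  have hca := getElem?_reverse_append_of_cons_isSuffix ha w
  have hdb := getElem?_reverse_append_of_cons_isSuffix hb w
  rw [hta.getElem?_reverse hi] at hca
  rw [htb.getElem?_reverse hi, hca] at hdb
  exact hcd (Option.some_injective _ hdb)

end

theorem max_common_suffix_append_general {A : Type*} (u v s : List A)
    (hv : v ≠ [])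
    (x x' : ℕ → A)
    -- `x` is the left-infinite word `v^∞`
    (hx : ∀ k : ℕ, LSuffix (wpow v k) x)
    -- `x'` is the left-infinite word `v^∞ u`
    (hx' : ∀ k : ℕ, LSuffix (wpow v k ++ u) x')
    -- `s` is the maximal common suffix of `x` and `x'`
    (hsx : LSuffix s x) (hsx' : LSuffix s x')
    (hmax : ∀ s' : List A, LSuffix s' x → LSuffix s' x' → s'.length ≤ s.length)
    (y z : List A)
    (hy : ∃ cy : List A, IsConcat u v cy ∧ y <:+ cy)
    (hz : ∃ cz : List A, IsConcat u v cz ∧ z <:+ cz)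
    (hys : s.length ≤ y.length) (hzs : s.length ≤ z.length)
    (w : List A) :
    IsMaxCommonSuffix (s ++ w) (y ++ v ++ w) (z ++ u ++ w) := by
  have hxv : lappend x v = x :=
    lappend_eq_of_lsuffix_wpow hv hx fun k => wpow_succ v k ▸ hx (k + 1)
  have hxu : lappend x u = x' := lappend_eq_of_lsuffix_wpow hv hx hx'
  have hne : x s.length ≠ x' s.length := fun h => by
    simpa using hmax _ hsx.cons_apply_length (h ▸ hsx'.cons_apply_length)
  have hu : u ≠ [] := by
    rintro rfl
    exact hne (by rw [← hxu, lappend_nil])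
  have hconcat : ∀ c, IsConcat u v c → EqOn (lappend x c) x (Iio s.length) := by
    rintro c ⟨l, hl, rfl⟩
    refine eqOn_lappend_flatten fun b hb => ?_
    rcases hl b hb with rfl | rfl
    · rw [hxu]
      exact (hsx.eqOn hsx').symm
    · rw [hxv]
      exact eqOn_refl _ _
  obtain ⟨cy, hcy, hycy⟩ := hy
  obtain ⟨cz, hcz, hzcz⟩ := hz
  have hv1 := List.length_pos_iff.mpr hv
  have hu1 := List.length_pos_iff.mpr hu
  have hyv : x s.length :: s <:+ y ++ v :=
    isSuffix_append_of_lappend_eqOn hycy (hconcat cy hcy)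
      (by rw [hxv]; exact hsx.cons_apply_length) (by simp only [List.length_cons]; omega)
      (by simp only [List.length_cons]; omega)
  have hzu : x' s.length :: s <:+ z ++ u :=
    isSuffix_append_of_lappend_eqOn hzcz (hconcat cz hcz)
      (by rw [hxu]; exact hsx'.cons_apply_length) (by simp only [List.length_cons]; omega)
      (by simp only [List.length_cons]; omega)
  exact isMaxCommonSuffix_append_of_cons_isSuffix hyv hzu hne w

/-- Let `s` be the maximal common suffix of `v^∞` and `v^∞u`, where `v` is a suffix
of `u` and `u, v` are not powers of a common word.  If `y` and `z` are suffixes of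
concatenations of `u` and `v`, both of length at least `|s|`, then for any word `w`
the maximal common suffix of `yvw` and `zuw` is `sw`. -/
theorem max_common_suffix_append {A : Type*} (u v s : List A)
    (hv : v ≠ []) (hsuf : v <:+ u)
    (hnp : ¬ ∃ (w : List A) (t r : ℕ), 0 < t ∧ 0 < r ∧ u = wpow w t ∧ v = wpow w r)
    (x x' : ℕ → A)
    -- `x` is the left-infinite word `v^∞`
    (hx : ∀ k : ℕ, LSuffix (wpow v k) x)
    -- `x'` is the left-infinite word `v^∞ u`
    (hx' : ∀ k : ℕ, LSuffix (wpow v k ++ u) x')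
    -- `s` is the maximal common suffix of `x` and `x'`
    (hsx : LSuffix s x) (hsx' : LSuffix s x')
    (hmax : ∀ s' : List A, LSuffix s' x → LSuffix s' x' → s'.length ≤ s.length)
    (y z : List A)
    (hy : ∃ cy : List A, IsConcat u v cy ∧ y <:+ cy)
    (hz : ∃ cz : List A, IsConcat u v cz ∧ z <:+ cz)
    (hys : s.length ≤ y.length) (hzs : s.length ≤ z.length)
    (w : List A) :
    IsMaxCommonSuffix (s ++ w) (y ++ v ++ w) (z ++ u ++ w) :=
  max_common_suffix_append_general u v s hv x x' hx hx' hsx hsx' hmax y z hy hz hys hzs w
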